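/- arXiv:1811.11911 — 2 statements merged into one kernel-verified Lean document; each statement's English description precedes it below -/
import Mathlib

section
/- Soundness of the step-indexed refinement relation: if for every step index z we have nrefines_ z s0 impl, where get_spec s0 = spec and get_ns s0 is the initial network state (all connections CLOSED), then impl network-refines spec, i.e., every network trace in impl_behavior impl also lies in spec_behavior spec. -/
/-! ## Interaction trees -/

/-- Node shapes of an interaction tree over event signature `E` with result type `R`. -/
inductive ITreeShape (E : Type → Type) (R : Type) : Type 1
  | ret (r : R) : ITreeShape E R
  | tau : ITreeShape E R
  | vis (X : Type) (e : E X) : ITreeShape E R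

/-- The polynomial functor whose final coalgebra is the type of interaction trees. -/
def ITreeF (E : Type → Type) (R : Type) : PFunctor.{1, 1} :=
  ⟨ITreeShape E R, fun s =>
    match s with
    | .ret _ => PEmpty
    | .tau => PUnit
    | .vis X _ => ULift X⟩

/-- Interaction trees: the coinductive type with constructors `Ret`, `Tau` and `Vis`,
realized as the M-type (final coalgebra) of `ITreeF E R`. -/
def ITree (E : Type → Type) (R : Type) : Type 1 :=
  (ITreeF E R).M

namespace ITree

variable {E : Type → Type} {A B R S : Type}

/-- `Ret r`: the computation that halts returning `r`. -/
def ret (r : R) : ITree E R :=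
  PFunctor.M.mk ⟨ITreeShape.ret r, fun x => PEmpty.elim x⟩

/-- `Tau t`: a silent internal step followed by `t`. -/
def tau (t : ITree E R) : ITree E R :=
  PFunctor.M.mk ⟨ITreeShape.tau, fun _ => t⟩

/-- `Vis e k`: a visible event `e` awaiting an answer `x : X`, continuing as `k x`. -/
def vis {X : Type} (e : E X) (k : X → ITree E R) : ITree E R :=
  PFunctor.M.mk ⟨ITreeShape.vis X e, fun x => k x.down⟩

/-- Monadic bind: corecursively grafts `k r` at each leaf `Ret r`. -/
def bind (t : ITree E A) (k : A → ITree E R) : ITree E R :=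
  PFunctor.M.corec
    (fun s =>
      match s with
      | Sum.inl t' =>
        match PFunctor.M.dest t' with
        | ⟨ITreeShape.ret a, _⟩ =>
          match PFunctor.M.dest (k a) with
          | ⟨sh, ch⟩ => ⟨sh, fun b => Sum.inr (ch b)⟩
        | ⟨ITreeShape.tau, ch⟩ => ⟨ITreeShape.tau, fun b => Sum.inl (ch b)⟩
        | ⟨ITreeShape.vis X e, ch⟩ => ⟨ITreeShape.vis X e, fun b => Sum.inl (ch b)⟩
      | Sum.inr u =>
        match PFunctor.M.dest u with
        | ⟨sh, ch⟩ => ⟨sh, fun b => Sum.inr (ch b)⟩)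
    (Sum.inl t : ITree E A ⊕ ITree E R)

instance : Monad (ITree E) where
  pure := ret
  bind := bind

/-- Perform a single event and return its answer. -/
def trigger {X : Type} (e : E X) : ITree E X :=
  vis e ret

/-- The silently diverging tree: `spin = Tau spin`. -/
def spin : ITree E R :=
  PFunctor.M.corec (fun _ : PUnit.{2} => ⟨ITreeShape.tau, fun _ => PUnit.unit⟩) PUnit.unit

/-- Iterate a body `step` forever (a `CoFixpoint` loop threading a state `s : S`). -/
def loop (step : S → ITree E S) (s₀ : S) : ITree E Unit :=
  PFunctor.M.corec
    (fun t : ITree E S =>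
      match PFunctor.M.dest t with
      | ⟨ITreeShape.ret s, _⟩ => ⟨ITreeShape.tau, fun _ => step s⟩
      | ⟨ITreeShape.tau, ch⟩ => ⟨ITreeShape.tau, fun b => ch b⟩
      | ⟨ITreeShape.vis X e, ch⟩ => ⟨ITreeShape.vis X e, fun b => ch b⟩)
    (step s₀)

/-! ## Equivalence up to Tau (weak bisimulation) -/

/-- `Untaus t u`: `u` is obtained from `t` by removing finitely many leading `Tau`
nodes, and `u` does not itself start with a `Tau`. -/
inductive Untaus : ITree E R → ITree E R → Prop
  | base {t : ITree E R} (h : ∀ t', t ≠ tau t') : Untaus t t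
  | step {t u : ITree E R} (h : Untaus t u) : Untaus (tau t) u

/-- `t` converges to a non-`Tau` node after finitely many leading `Tau`s. -/
def FiniteTaus (t : ITree E R) : Prop := ∃ t', Untaus t t'

/-- Two trees with no leading `Tau` match up to `Rel`: both are the same `Ret`,
or both are `Vis` of the same event with continuations pointwise related by `Rel`. -/
def EqHead (Rel : ITree E R → ITree E R → Prop) (t u : ITree E R) : Prop :=
  (∃ r : R, t = ret r ∧ u = ret r) ∨
  (∃ (X : Type) (e : E X) (k k' : X → ITree E R),
      t = vis e k ∧ u = vis e k' ∧ ∀ x : X, Rel (k x) (k' x))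

/-- `Rel` is a weak bisimulation. -/
def IsEuttRel (Rel : ITree E R → ITree E R → Prop) : Prop :=
  ∀ t u, Rel t u →
    (FiniteTaus t ↔ FiniteTaus u) ∧
    (∀ t' u', Untaus t t' → Untaus u u' → EqHead Rel t' u')

/-- Equivalence up to `Tau`: the greatest weak bisimulation. -/
def Eutt (t u : ITree E R) : Prop :=
  ∃ Rel, IsEuttRel Rel ∧ Rel t u

/-! ## Traces -/

/-- An event together with the environment's answer. -/
structure EventE (E : Type → Type) : Type 1 where
  X : Type
  e : E X
  ans : X

/-- `IsTrace t tr r?` holds when `tr` lists, in order, the `Vis` events (with answers)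
along a finite `Tau`-skipping path of `t`, with `r? = some r` if the path ends at
`Ret r` and `none` otherwise. -/
inductive IsTrace : ITree E R → List (EventE E) → Option R → Prop
  | nil (t : ITree E R) : IsTrace t [] none
  | retEnd (r : R) : IsTrace (ITree.ret r) [] (some r)
  | tauStep {t : ITree E R} {tr r?} : IsTrace t tr r? → IsTrace (ITree.tau t) tr r?
  | visStep {X : Type} (e : E X) (x : X) {k : X → ITree E R} {tr r?} :
      IsTrace (k x) tr r? → IsTrace (ITree.vis e k) (⟨X, e, x⟩ :: tr) r?

/-- Trace refinement: every trace of `t` (with its optional result) is a trace of `u`. -/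
def Refines (t u : ITree E R) : Prop :=
  ∀ tr r?, IsTrace t tr r? → IsTrace u tr r?

end ITree
/-! ## The swap server and its network model -/

/-- Connection identifiers. -/
abbrev ConnectionId := ℕ

/-- Bytes. -/
abbrev Byte := UInt8

/-- The fixed size of swap messages. -/
def msgLen : ℕ := 1024

/-- Fixed-size messages. -/
def Message : Type := { l : List Byte // l.length = msgLen }

/-- The all-zeros message (the server's initial stored message). -/
def zeros : Message := ⟨List.replicate msgLen 0, by simp⟩

/-- Events observable over the network. -/
inductive NetworkEvent : Type
  | NewConnection (c : ConnectionId)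
  | ToServer (c : ConnectionId) (b : Byte)
  | FromServer (c : ConnectionId) (b : Byte)

/-- Network traces. -/
abbrev NetworkTrace := List NetworkEvent

/-- Status of a connection in the network. -/
inductive ConnectionStatus : Type
  | CLOSED
  | PENDING
  | ACCEPTED
  deriving DecidableEq

/-- Per-connection network state: a status and two FIFO buffers of in-flight bytes. -/
structure ConnectionNetState : Type where
  status : ConnectionStatus
  /-- bytes in flight from the client to the server -/
  toServer : List Byte
  /-- bytes in flight from the server to the client -/
  fromServer : List Byte

/-- A network state assigns to each connection a status and in-flight buffers. -/
def NetworkState : Type := ConnectionId → ConnectionNetState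

/-- The initial network state: all connections `CLOSED` with empty buffers. -/
def initial_ns : NetworkState := fun _ => ⟨ConnectionStatus.CLOSED, [], []⟩

/-- Update the state of one connection. -/
def updateNs (ns : NetworkState) (c : ConnectionId) (cs : ConnectionNetState) : NetworkState :=
  fun c' => if c' = c then cs else ns c'

/-- Labeled transitions of the network performed by the server:
accepting a pending connection, receiving from the head of the incoming buffer
(possible while `PENDING` or `ACCEPTED`), or emitting a byte (only on an
`ACCEPTED` connection, appended to the outgoing buffer). -/
def server_transition (ev : NetworkEvent) (ns ns' : NetworkState) : Prop :=
  match ev with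
  | NetworkEvent.NewConnection c =>
      (ns c).status = ConnectionStatus.PENDING ∧
      ns' = updateNs ns c { ns c with status := ConnectionStatus.ACCEPTED }
  | NetworkEvent.ToServer c b =>
      ((ns c).status = ConnectionStatus.PENDING ∨ (ns c).status = ConnectionStatus.ACCEPTED) ∧
      ∃ rest, (ns c).toServer = b :: rest ∧
        ns' = updateNs ns c { ns c with toServer := rest }
  | NetworkEvent.FromServer c b =>
      (ns c).status = ConnectionStatus.ACCEPTED ∧
      ns' = updateNs ns c { ns c with fromServer := (ns c).fromServer ++ [b] }

/-- Labeled transitions of the network performed by clients: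
opening a closed connection (making it `PENDING`), sending a byte
(appended to the incoming buffer), or receiving a byte from the head of the
outgoing buffer. -/
def client_transition (ev : NetworkEvent) (ns ns' : NetworkState) : Prop :=
  match ev with
  | NetworkEvent.NewConnection c =>
      (ns c).status = ConnectionStatus.CLOSED ∧
      ns' = updateNs ns c { ns c with status := ConnectionStatus.PENDING }
  | NetworkEvent.ToServer c b =>
      ((ns c).status = ConnectionStatus.PENDING ∨ (ns c).status = ConnectionStatus.ACCEPTED) ∧
      ns' = updateNs ns c { ns c with toServer := (ns c).toServer ++ [b] }
  | NetworkEvent.FromServer c b =>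
      (ns c).status = ConnectionStatus.ACCEPTED ∧
      ∃ rest, (ns c).fromServer = b :: rest ∧
        ns' = updateNs ns c { ns c with fromServer := rest }

/-- `network_reordered_ ns ts tc` holds iff, starting from state `ns`, there is an
interleaved execution of the network consisting of server transitions labeled, in
order, by `ts` and client transitions labeled, in order, by `tc`. -/
inductive network_reordered_ : NetworkState → NetworkTrace → NetworkTrace → Prop
  | nil (ns : NetworkState) : network_reordered_ ns [] []
  | server {ns ns' : NetworkState} {ev : NetworkEvent} {ts tc : NetworkTrace} :
      server_transition ev ns ns' → network_reordered_ ns' ts tc →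
      network_reordered_ ns (ev :: ts) tc
  | client {ns ns' : NetworkState} {ev : NetworkEvent} {ts tc : NetworkTrace} :
      client_transition ev ns ns' → network_reordered_ ns' ts tc →
      network_reordered_ ns ts (ev :: tc)

/-- Reordering by the network, starting from the initial (all-`CLOSED`) state. -/
def network_reordered (ts tc : NetworkTrace) : Prop :=
  network_reordered_ initial_ns ts tc

/-- The server side takes the sequence of steps labeled by `tr` from `ns` to `ns'`. -/
inductive server_transitions : NetworkTrace → NetworkState → NetworkState → Prop
  | nil (ns : NetworkState) : server_transitions [] ns ns
  | cons {ev : NetworkEvent} {tr : NetworkTrace} {ns ns' ns'' : NetworkState} :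
      server_transition ev ns ns' → server_transitions tr ns' ns'' →
      server_transitions (ev :: tr) ns ns''

/-! ### The linear specification -/

/-- Events of the linear specification: observing a new connection, a complete
message sent to the server, a complete message sent back by the server, and
(binary) nondeterministic choice. -/
inductive SpecE : Type → Type
  | obs_connect : SpecE ConnectionId
  | obs_msg_to_server (c : ConnectionId) : SpecE Message
  | obs_msg_from_server (c : ConnectionId) (msg : Message) : SpecE Unit
  | or : SpecE Bool

/-- Binary nondeterministic choice for specification trees. -/
def specOr {A : Type} (t u : ITree SpecE A) : ITree SpecE A :=
  ITree.vis SpecE.or (fun b => if b then t else u)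

/-- Nondeterministically choose an element of a list (built from binary choice). -/
def specChoose {A : Type} : List A → ITree SpecE A
  | [] => ITree.spin
  | x :: xs => specOr (ITree.ret x) (specChoose xs)

/-- One step of the linear specification: either accept a new connection, or pick
an open connection, receive a message on it, send back the last stored message,
and store the received one. -/
def specStep : List ConnectionId × Message → ITree SpecE (List ConnectionId × Message) :=
  fun st =>
    let conns := st.1
    let last_msg := st.2
    specOr
      (ITree.bind (ITree.trigger SpecE.obs_connect) fun c =>
        ITree.ret (c :: conns, last_msg))
      (ITree.bind (specChoose conns) fun c =>
        ITree.bind (ITree.trigger (SpecE.obs_msg_to_server c)) fun msg =>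
          ITree.bind (ITree.trigger (SpecE.obs_msg_from_server c last_msg)) fun _ =>
            ITree.ret (conns, msg))

/-- The linear specification, parameterized by the open connections and last message. -/
def linear_spec' (conns : List ConnectionId) (last_msg : Message) : ITree SpecE Unit :=
  ITree.loop specStep (conns, last_msg)

/-- The linear specification of the swap server. -/
def linear_spec : ITree SpecE Unit := linear_spec' [] zeros

/-! ### The implementation model -/

/-- Events of the implementation model: accepting a connection (possibly failing),
receiving a byte on a connection, sending a byte on a connection, and (binary)
nondeterministic choice. -/
inductive ImplE : Type → Type
  | accept : ImplE (Option ConnectionId)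
  | recv_byte (c : ConnectionId) : ImplE Byte
  | send_byte (c : ConnectionId) (b : Byte) : ImplE Unit
  | or : ImplE Bool

/-- Binary nondeterministic choice for implementation trees. -/
def implOr {A : Type} (t u : ITree ImplE A) : ITree ImplE A :=
  ITree.vis ImplE.or (fun b => if b then t else u)

/-- Nondeterministically choose an element of a list (built from binary choice). -/
def implChoose {A : Type} : List A → ITree ImplE A
  | [] => ITree.spin
  | x :: xs => implOr (ITree.ret x) (implChoose xs)

/-- Receive one byte on connection `c`. -/
def recv_byte (c : ConnectionId) : ITree ImplE Byte :=
  ITree.trigger (ImplE.recv_byte c)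

/-- Receive exactly `n` bytes on connection `c`. -/
def recv_bytes (c : ConnectionId) : ℕ → ITree ImplE (List Byte)
  | 0 => ITree.ret []
  | n + 1 =>
      ITree.bind (recv_byte c) fun b =>
        ITree.bind (recv_bytes c n) fun bs => ITree.ret (b :: bs)

/-- Send the bytes `bs` on connection `c`. -/
def send_bytes (c : ConnectionId) : List Byte → ITree ImplE Unit
  | [] => ITree.ret ()
  | b :: bs => ITree.bind (ITree.trigger (ImplE.send_byte c b)) fun _ => send_bytes c bs

/-- Per-connection state machine states of the server. -/
inductive ConnState : Type
  | RECVING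
  | SENDING
  | DELETED
  deriving DecidableEq

/-- A connection structure of the server: an id, a state, and receive/send buffers. -/
structure Connection : Type where
  conn_id : ConnectionId
  state : ConnState
  recvBuf : List Byte
  sendBuf : List Byte

/-- Whether a connection structure is in state `st`. -/
def has_conn_state (st : ConnState) (c : Connection) : Bool :=
  decide (c.state = st)

/-- Replace, in `l`, every element satisfying `p` by `c'`. -/
def replace_when (p : Connection → Bool) (c' : Connection) (l : List Connection) :
    List Connection :=
  l.map fun x => if p x then c' else x

/-- Service one connection: a `RECVING` connection receives some bytes into its
buffer and, upon completing a fixed-size message, swaps it with the stored message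
and moves to `SENDING`; a `SENDING` connection sends some prefix of its send
buffer, reverting to `RECVING` once the buffer is empty. -/
def process_conn (c : Connection) (last_full_msg : Message) :
    ITree ImplE (Connection × Message) :=
  match c.state with
  | ConnState.RECVING =>
      ITree.bind (implChoose (List.range (msgLen - c.recvBuf.length + 1))) fun n =>
        ITree.bind (recv_bytes c.conn_id n) fun bs =>
          let buf' := c.recvBuf ++ bs
          if h : buf'.length = msgLen then
            ITree.ret
              ({ c with state := ConnState.SENDING, recvBuf := [],
                        sendBuf := last_full_msg.1 },
               ⟨buf', h⟩)
          else
            ITree.ret ({ c with recvBuf := buf' }, last_full_msg)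
  | ConnState.SENDING =>
      ITree.bind (implChoose (List.range (c.sendBuf.length + 1))) fun n =>
        ITree.bind (send_bytes c.conn_id (c.sendBuf.take n)) fun _ =>
          let rest := c.sendBuf.drop n
          if rest.isEmpty then
            ITree.ret ({ c with state := ConnState.RECVING, sendBuf := [] }, last_full_msg)
          else
            ITree.ret ({ c with sendBuf := rest }, last_full_msg)
  | ConnState.DELETED => ITree.ret (c, last_full_msg)

/-- Accept a new connection (the environment may refuse). -/
def accept_connection : ITree ImplE (Option Connection) :=
  ITree.bind (ITree.trigger ImplE.accept) fun r =>
    match r with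
    | some cid => ITree.ret (some ⟨cid, ConnState.RECVING, [], []⟩)
    | none => ITree.ret none

/-- Body of the main loop of the implementation model: either accept a new
connection, or choose a `RECVING` or `SENDING` connection and service it. -/
def select_loop_body (server_st : List Connection × Message) :
    ITree ImplE (List Connection × Message) :=
  let conns := server_st.1
  let last_full_msg := server_st.2
  implOr
    (ITree.bind accept_connection fun r =>
      match r with
      | some c => ITree.ret (c :: conns, last_full_msg)
      | none => ITree.ret (conns, last_full_msg))
    (ITree.bind
      (implChoose
        (conns.filter (has_conn_state ConnState.RECVING) ++
         conns.filter (has_conn_state ConnState.SENDING))) fun c =>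
      ITree.bind (process_conn c last_full_msg) fun new_st =>
        let c' := new_st.1
        let last_full_msg' := new_st.2
        let conns' :=
          replace_when
            (fun x =>
              if has_conn_state ConnState.RECVING x || has_conn_state ConnState.SENDING x
              then decide (x.conn_id = c'.conn_id)
              else false)
            c' conns
        ITree.ret (conns', last_full_msg'))

/-- The implementation model: iterate `select_loop_body` forever from the empty
connection list and the all-zeros stored message. -/
def impl_model : ITree ImplE Unit :=
  ITree.loop select_loop_body ([], zeros)

/-! ### Converting ITree traces to network traces -/

/-- The evident conversion of specification events (with answers) to network events. -/
def specEventToNet : ITree.EventE SpecE → List NetworkEvent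
  | ⟨_, SpecE.obs_connect, c⟩ => [NetworkEvent.NewConnection c]
  | ⟨_, SpecE.obs_msg_to_server c, msg⟩ => msg.1.map (NetworkEvent.ToServer c)
  | ⟨_, SpecE.obs_msg_from_server c msg, _⟩ => msg.1.map (NetworkEvent.FromServer c)
  | ⟨_, SpecE.or, _⟩ => []

/-- The evident conversion of implementation events (with answers) to network events. -/
def implEventToNet : ITree.EventE ImplE → List NetworkEvent
  | ⟨_, ImplE.accept, some c⟩ => [NetworkEvent.NewConnection c]
  | ⟨_, ImplE.accept, none⟩ => []
  | ⟨_, ImplE.recv_byte c, b⟩ => [NetworkEvent.ToServer c b]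
  | ⟨_, ImplE.send_byte c b, _⟩ => [NetworkEvent.FromServer c b]
  | ⟨_, ImplE.or, _⟩ => []

/-- `tr` is a network trace of the specification tree `spec`. -/
def is_spec_trace (spec : ITree SpecE Unit) (tr : NetworkTrace) : Prop :=
  ∃ (etr : List (ITree.EventE SpecE)) (r? : Option Unit),
    ITree.IsTrace spec etr r? ∧ tr = (etr.map specEventToNet).flatten

/-- `tr` is a network trace of the implementation tree `impl`. -/
def is_impl_trace (impl : ITree ImplE Unit) (tr : NetworkTrace) : Prop :=
  ∃ (etr : List (ITree.EventE ImplE)) (r? : Option Unit),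
    ITree.IsTrace impl etr r? ∧ tr = (etr.map implEventToNet).flatten

/-! ### The step-indexed refinement relation -/

/-- The reasoning state: the current network state, the remaining specification
tree, and bookkeeping of the bytes received so far on each connection. -/
structure SState : Type 1 where
  get_ns : NetworkState
  get_spec : ITree SpecE Unit
  get_inbytes : ConnectionId → List Byte

/-- Functional update of the network-state component. -/
def set_ns (ns : NetworkState) (s : SState) : SState := { s with get_ns := ns }

/-- Functional update of the specification component. -/
def set_spec (spec : ITree SpecE Unit) (s : SState) : SState := { s with get_spec := spec }

/-- Status of connection `c` in the network-state component of `s`. -/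
def get_status (s : SState) (c : ConnectionId) : ConnectionStatus :=
  (s.get_ns c).status

/-- Append `bs` to the record of bytes received from connection `c`. -/
def append_inbytes (c : ConnectionId) (bs : List Byte) (s : SState) : SState :=
  { s with get_inbytes := fun c' => if c' = c then s.get_inbytes c' ++ bs else s.get_inbytes c' }

/-- `tr` is an implementation trace of `impl` of at most `z` observable steps,
relative to the reasoning state `s`. -/
def is_impl_trace_ (z : ℕ) (_s : SState) (impl : ITree ImplE Unit) (tr : NetworkTrace) :
    Prop :=
  is_impl_trace impl tr ∧ tr.length ≤ z

/-- The generalized (step-indexed) network-refinement relation. -/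
def nrefines_ (z : ℕ) (s : SState) (impl : ITree ImplE Unit) : Prop :=
  ∀ tr, is_impl_trace_ z s impl tr →
    ∃ dstr : NetworkTrace,
      network_reordered_ s.get_ns dstr tr ∧ is_spec_trace s.get_spec dstr

/-- Network behaviors of an implementation tree: network traces obtained by
disordering one of its server-side traces, starting from the initial state. -/
def impl_behavior (impl : ITree ImplE Unit) (tr : NetworkTrace) : Prop :=
  ∃ ts : NetworkTrace, is_impl_trace impl ts ∧ network_reordered ts tr

/-- Network behaviors of a specification tree. -/
def spec_behavior (spec : ITree SpecE Unit) (tr : NetworkTrace) : Prop :=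
  ∃ ds : NetworkTrace, is_spec_trace spec ds ∧ network_reordered ds tr

/-! Network reordering is transitive: two reordering networks placed in series, the client
side of the first acting as the server side of the second, behave as a single network
whose buffers are the concatenations of theirs. Hence a reordering of a reordering of an
implementation trace is again a reordering of it, which is what turns the step-indexed
refinement into network refinement. -/

namespace ConnectionStatus

theorem ne_CLOSED_iff {s : ConnectionStatus} : s ≠ CLOSED ↔ s = PENDING ∨ s = ACCEPTED := by
  cases s <;> simp

/-- `Composite a b c`: `c` is the status seen from outside when a connection has status `a`
in the server-side network and `b` in the client-side network. -/
inductive Composite : ConnectionStatus → ConnectionStatus → ConnectionStatus → Prop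
  | closed : Composite CLOSED CLOSED CLOSED
  | pending : Composite CLOSED PENDING PENDING
  | half_accepted : Composite PENDING ACCEPTED PENDING
  | accepted : Composite ACCEPTED ACCEPTED ACCEPTED

namespace Composite

variable {a b c : ConnectionStatus}

theorem eq_left_of_ne_CLOSED (h : Composite a b c) (ha : a ≠ CLOSED) : c = a := by
  cases h <;> simp_all

theorem eq_right_of_left_CLOSED (h : Composite CLOSED b c) : c = b := by
  cases h <;> rfl

theorem of_right_CLOSED (h : Composite a CLOSED c) : a = CLOSED ∧ c = CLOSED := by
  cases h; simp

theorem of_left_PENDING (h : Composite PENDING b c) : b = ACCEPTED ∧ c = PENDING := by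
  cases h; simp

theorem ne_CLOSED_of_right_ne_CLOSED (h : Composite a b c) (hb : b ≠ CLOSED) : c ≠ CLOSED := by
  cases h <;> simp_all

end Composite

end ConnectionStatus

open ConnectionStatus

/-- `IsComposite a b c`: the connection state `c` is obtained by placing `a` (server side)
and `b` (client side) in series. -/
structure ConnectionNetState.IsComposite (a b c : ConnectionNetState) : Prop where
  toServer_eq : c.toServer = a.toServer ++ b.toServer
  fromServer_eq : c.fromServer = b.fromServer ++ a.fromServer
  status : Composite a.status b.status c.status
  accepted_of_fromServer_ne_nil : b.fromServer ≠ [] → a.status = ACCEPTED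

def NetworkState.IsComposite (ns₁ ns₂ ns : NetworkState) : Prop :=
  ∀ c, (ns₁ c).IsComposite (ns₂ c) (ns c)

theorem updateNs_self (ns : NetworkState) (c : ConnectionId) :
    updateNs ns c (ns c) = ns := by
  funext c'
  by_cases hc : c' = c <;> simp [updateNs, hc]

namespace NetworkState.IsComposite

variable {ns₁ ns₂ ns ns₁' ns₂' : NetworkState} {ev : NetworkEvent}

theorem initial : IsComposite initial_ns initial_ns initial_ns :=
  fun _ => ⟨rfl, rfl, .closed, fun h => absurd rfl h⟩

theorem update (hI : IsComposite ns₁ ns₂ ns) (c : ConnectionId)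
    {a b d : ConnectionNetState} (h : a.IsComposite b d) :
    IsComposite (updateNs ns₁ c a) (updateNs ns₂ c b) (updateNs ns c d) := by
  intro c'
  by_cases hc : c' = c
  · subst hc; simpa [updateNs] using h
  · simpa [updateNs, hc] using hI c'

theorem update_left (hI : IsComposite ns₁ ns₂ ns) (c : ConnectionId)
    {a d : ConnectionNetState} (h : a.IsComposite (ns₂ c) d) :
    IsComposite (updateNs ns₁ c a) ns₂ (updateNs ns c d) := by
  simpa only [updateNs_self] using hI.update c h

theorem update_right (hI : IsComposite ns₁ ns₂ ns) (c : ConnectionId)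
    {b d : ConnectionNetState} (h : (ns₁ c).IsComposite b d) :
    IsComposite ns₁ (updateNs ns₂ c b) (updateNs ns c d) := by
  simpa only [updateNs_self] using hI.update c h

theorem update_sides (hI : IsComposite ns₁ ns₂ ns) (c : ConnectionId)
    {a b : ConnectionNetState} (h : a.IsComposite b (ns c)) :
    IsComposite (updateNs ns₁ c a) (updateNs ns₂ c b) ns := by
  simpa only [updateNs_self] using hI.update c h

theorem server_step (hI : IsComposite ns₁ ns₂ ns) (h : server_transition ev ns₁ ns₁') :
    ∃ ns', server_transition ev ns ns' ∧ IsComposite ns₁' ns₂ ns' := by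
  cases ev with
  | NewConnection c =>
    obtain ⟨hP, rfl⟩ := h
    have hc := hI c
    obtain ⟨hb, hd⟩ := (hP ▸ hc.status).of_left_PENDING
    refine ⟨_, ⟨hd, rfl⟩, ?_⟩
    exact hI.update_left c ⟨hc.toServer_eq, hc.fromServer_eq, hb ▸ .accepted, fun _ => rfl⟩
  | ToServer c b =>
    obtain ⟨hP, rest, hbr, rfl⟩ := h
    have hc := hI c
    have hd := hc.status.eq_left_of_ne_CLOSED (ne_CLOSED_iff.2 hP)
    refine ⟨_, ⟨hd ▸ hP, rest ++ (ns₂ c).toServer, by simp [hc.toServer_eq, hbr], rfl⟩,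
      ?_⟩
    exact hI.update_left c
      ⟨rfl, hc.fromServer_eq, hd ▸ hc.status, hc.accepted_of_fromServer_ne_nil⟩
  | FromServer c b =>
    obtain ⟨hA, rfl⟩ := h
    have hc := hI c
    have hd := hc.status.eq_left_of_ne_CLOSED (by simp [hA])
    refine ⟨_, ⟨hd ▸ hA, rfl⟩, ?_⟩
    exact hI.update_left c ⟨hc.toServer_eq, by simp [hc.fromServer_eq], hc.status, fun _ => hA⟩

theorem client_step (hI : IsComposite ns₁ ns₂ ns) (h : client_transition ev ns₂ ns₂') :
    ∃ ns', client_transition ev ns ns' ∧ IsComposite ns₁ ns₂' ns' := by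
  cases ev with
  | NewConnection c =>
    obtain ⟨hC, rfl⟩ := h
    have hc := hI c
    obtain ⟨ha, hd⟩ := (hC ▸ hc.status).of_right_CLOSED
    refine ⟨_, ⟨hd, rfl⟩, ?_⟩
    exact hI.update_right c
      ⟨hc.toServer_eq, hc.fromServer_eq, ha ▸ .pending, hc.accepted_of_fromServer_ne_nil⟩
  | ToServer c b =>
    obtain ⟨hP, rfl⟩ := h
    have hc := hI c
    refine ⟨_, ⟨ne_CLOSED_iff.1 (hc.status.ne_CLOSED_of_right_ne_CLOSED
      (ne_CLOSED_iff.2 hP)), rfl⟩, ?_⟩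
    exact hI.update_right c
      ⟨by simp [hc.toServer_eq], hc.fromServer_eq, hc.status, hc.accepted_of_fromServer_ne_nil⟩
  | FromServer c b =>
    obtain ⟨-, rest, hbr, rfl⟩ := h
    have hc := hI c
    have ha := hc.accepted_of_fromServer_ne_nil (by simp [hbr])
    have hd := hc.status.eq_left_of_ne_CLOSED (by simp [ha])
    refine ⟨_, ⟨hd ▸ ha, rest ++ (ns₁ c).fromServer,
      by simp [hc.fromServer_eq, hbr], rfl⟩, ?_⟩
    exact hI.update_right c ⟨hc.toServer_eq, rfl, hc.status, fun _ => ha⟩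

/-- A client step of the server-side network synchronized with the same server step of the
client-side network moves a byte (or the connection handshake) across the junction, which
is invisible from outside. -/
theorem sync_step (hI : IsComposite ns₁ ns₂ ns) (h₁ : client_transition ev ns₁ ns₁')
    (h₂ : server_transition ev ns₂ ns₂') : IsComposite ns₁' ns₂' ns := by
  cases ev with
  | NewConnection c =>
    obtain ⟨hC, rfl⟩ := h₁
    obtain ⟨hP, rfl⟩ := h₂
    have hc := hI c
    have hd := (hC ▸ hc.status).eq_right_of_left_CLOSED
    have hfrom : (ns₂ c).fromServer = [] := by
      by_contra hne
      simp [hc.accepted_of_fromServer_ne_nil hne] at hC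
    exact hI.update_sides c
      ⟨hc.toServer_eq, hc.fromServer_eq, hd ▸ hP ▸ .half_accepted, by simp [hfrom]⟩
  | ToServer c b =>
    obtain ⟨-, rfl⟩ := h₁
    obtain ⟨-, rest, hbr, rfl⟩ := h₂
    have hc := hI c
    exact hI.update_sides c
      ⟨by simp [hc.toServer_eq, hbr], hc.fromServer_eq, hc.status,
        hc.accepted_of_fromServer_ne_nil⟩
  | FromServer c b =>
    obtain ⟨hA, rest, hbr, rfl⟩ := h₁
    obtain ⟨-, rfl⟩ := h₂
    have hc := hI c
    exact hI.update_sides c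
      ⟨hc.toServer_eq, by simp [hc.fromServer_eq, hbr], hc.status, fun _ => hA⟩

end NetworkState.IsComposite

namespace network_reordered_

open NetworkState

theorem of_isComposite_of_clients {ns₁ ns₂ ns : NetworkState} {tr : NetworkTrace}
    (h₂ : network_reordered_ ns₂ [] tr) (hI : IsComposite ns₁ ns₂ ns) :
    network_reordered_ ns [] tr := by
  generalize hts : ([] : NetworkTrace) = ts at h₂
  induction h₂ generalizing ns with
  | nil => exact .nil ns
  | server => simp at hts
  | client hc _ ih =>
    obtain ⟨ns', hc', hI'⟩ := hI.client_step hc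
    exact .client hc' (ih hI' hts)

theorem of_isComposite {ns₁ ns₂ ns : NetworkState} {ds ts tr : NetworkTrace}
    (h₁ : network_reordered_ ns₁ ds ts) (h₂ : network_reordered_ ns₂ ts tr)
    (hI : IsComposite ns₁ ns₂ ns) : network_reordered_ ns ds tr := by
  induction h₁ generalizing ns₂ ns tr with
  | nil => exact of_isComposite_of_clients h₂ hI
  | server hs _ ih =>
    obtain ⟨ns', hs', hI'⟩ := hI.server_step hs
    exact .server hs' (ih h₂ hI')
  | @client _ _ ev _ ts' hc₁ h₁ ih =>
    generalize hts : ev :: ts' = ts at h₂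
    induction h₂ generalizing ns with
    | nil => simp at hts
    | server hs₂ h₂ =>
      obtain ⟨rfl, rfl⟩ := List.cons.inj hts
      exact ih h₂ (hI.sync_step hc₁ hs₂)
    | client hc₂ _ ih₂ =>
      obtain ⟨ns', hc', hI'⟩ := hI.client_step hc₂
      exact .client hc' (ih₂ hI' hts)

end network_reordered_

theorem network_reordered_trans {ds ts tr : NetworkTrace}
    (h₁ : network_reordered ds ts) (h₂ : network_reordered ts tr) : network_reordered ds tr :=
  h₁.of_isComposite h₂ .initial

/-- Soundness of the step-indexed refinement relation: if
`nrefines_ z s0 impl` holds for every step index `z`, where `s0` has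
specification component `spec` and the initial network state, then `impl`
network-refines `spec`. -/
theorem nrefines_sound (impl : ITree ImplE Unit) (spec : ITree SpecE Unit) (s0 : SState)
    (hspec : s0.get_spec = spec) (hns : s0.get_ns = initial_ns)
    (h : ∀ z : ℕ, nrefines_ z s0 impl) :
    ∀ tr : NetworkTrace, impl_behavior impl tr → spec_behavior spec tr := by
  rintro tr ⟨ts, hts, hts_tr⟩
  obtain ⟨ds, hds_ts, hds⟩ := h ts.length ts ⟨hts, le_rfl⟩
  rw [hns] at hds_ts
  rw [hspec] at hds
  exact ⟨ds, hds, network_reordered_trans hds_ts hts_tr⟩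
end

section
/- Equivalence up to Tau implies trace refinement: for any event signature E, result type R, and t, u : itree E R, if t ≡ u (t and u are weakly bisimilar, i.e., equivalent up to Tau) then t ⊑ u (every trace of t, with its optional result, is a trace of u). -/
/-! Induct on the trace of `t`. A leading `Tau` of `t` can be dropped without leaving `≡`,
and once `t` is a `Ret` or a `Vis`, the weak bisimulation forces `u` to reach the same node
after finitely many `Tau`s, with `≡`-related continuations; traces are closed under
prepending those `Tau`s. -/

namespace ITree

variable {E : Type → Type} {R : Type}

theorem ret_ne_tau (r : R) (t : ITree E R) : (ret r : ITree E R) ≠ tau t := fun h => by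
  cases PFunctor.M.mk_inj h

theorem vis_ne_tau {X : Type} (e : E X) (k : X → ITree E R) (t : ITree E R) :
    vis e k ≠ tau t := fun h => by
  cases PFunctor.M.mk_inj h

theorem ret_ne_vis {X : Type} (r : R) (e : E X) (k : X → ITree E R) :
    (ret r : ITree E R) ≠ vis e k := fun h => by
  cases PFunctor.M.mk_inj h

theorem ret_injective : Function.Injective (ret : R → ITree E R) := fun _ _ h => by
  cases PFunctor.M.mk_inj h
  rfl

theorem tau_injective : Function.Injective (tau : ITree E R → ITree E R) := fun _ _ h =>
  congrFun (eq_of_heq (Sigma.mk.inj (PFunctor.M.mk_inj h)).2) PUnit.unit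

theorem vis_inj {X Y : Type} {e : E X} {e' : E Y} {k : X → ITree E R} {k' : Y → ITree E R}
    (h : vis e k = vis e' k') : X = Y ∧ HEq e e' ∧ HEq k k' := by
  obtain ⟨hshape, hchildren⟩ := Sigma.mk.inj (PFunctor.M.mk_inj h)
  cases hshape
  exact ⟨rfl, HEq.rfl, heq_of_eq (funext fun x => congrFun (eq_of_heq hchildren) ⟨x⟩)⟩

theorem Untaus.ret (r : R) : Untaus (ret r : ITree E R) (ret r) :=
  .base (ret_ne_tau r)

theorem Untaus.vis {X : Type} (e : E X) (k : X → ITree E R) : Untaus (vis e k) (vis e k) :=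
  .base (vis_ne_tau e k)

theorem Untaus.of_tau {t u : ITree E R} (h : Untaus (tau t) u) : Untaus t u := by
  generalize ht : tau t = s at h
  cases h with
  | base hne => exact absurd ht.symm (hne t)
  | step h => rwa [tau_injective ht]

theorem finiteTaus_tau {t : ITree E R} : FiniteTaus (tau t) ↔ FiniteTaus t :=
  ⟨fun ⟨t', h⟩ => ⟨t', h.of_tau⟩, fun ⟨t', h⟩ => ⟨t', .step h⟩⟩

theorem IsTrace.of_untaus {t t' : ITree E R} {tr : List (EventE E)} {r? : Option R}
    (ht' : IsTrace t' tr r?) (h : Untaus t t') : IsTrace t tr r? := by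
  induction h with
  | base => exact ht'
  | step _ ih => exact .tauStep (ih ht')

theorem EqHead.mono {Rel Rel' : ITree E R → ITree E R → Prop}
    (hRel : ∀ a b, Rel a b → Rel' a b) {t u : ITree E R} (h : EqHead Rel t u) :
    EqHead Rel' t u := by
  rcases h with ⟨r, ht, hu⟩ | ⟨X, e, k, k', ht, hu, hk⟩
  · exact .inl ⟨r, ht, hu⟩
  · exact .inr ⟨X, e, k, k', ht, hu, fun x => hRel _ _ (hk x)⟩

-- Witness: `Rel` enlarged by the pairs `(a, b)` with `Rel (tau a) b`.
theorem Eutt.of_tau_left {t u : ITree E R} (h : Eutt (tau t) u) : Eutt t u := by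
  obtain ⟨Rel, hRel, htu⟩ := h
  refine ⟨fun a b => Rel a b ∨ Rel (tau a) b, ?_, .inr htu⟩
  rintro a b (hab | hab) <;> obtain ⟨hfin, hhead⟩ := hRel _ _ hab
  · exact ⟨hfin, fun a' b' ha hb => (hhead a' b' ha hb).mono fun _ _ => .inl⟩
  · exact ⟨finiteTaus_tau.symm.trans hfin,
      fun a' b' ha hb => (hhead a' b' (.step ha) hb).mono fun _ _ => .inl⟩

theorem Eutt.exists_untaus_eqHead {t t' u : ITree E R} (h : Eutt t u) (ht : Untaus t t') :
    ∃ u', Untaus u u' ∧ EqHead Eutt t' u' := by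
  obtain ⟨Rel, hRel, htu⟩ := h
  obtain ⟨hfin, hhead⟩ := hRel t u htu
  obtain ⟨u', hu⟩ := hfin.mp ⟨t', ht⟩
  exact ⟨u', hu, (hhead t' u' ht hu).mono fun a b hab => ⟨Rel, hRel, hab⟩⟩

theorem Eutt.untaus_of_ret_left {r : R} {u : ITree E R} (h : Eutt (ret r) u) :
    Untaus u (ret r) := by
  obtain ⟨u', hu, ⟨r', hr, rfl⟩ | ⟨X, e, k, k', hk, -⟩⟩ := h.exists_untaus_eqHead (.ret r)
  · rwa [ret_injective hr]
  · exact absurd hk (ret_ne_vis r e k)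

theorem Eutt.exists_untaus_vis_of_vis_left {X : Type} {e : E X} {k : X → ITree E R}
    {u : ITree E R} (h : Eutt (vis e k) u) :
    ∃ k' : X → ITree E R, Untaus u (vis e k') ∧ ∀ x, Eutt (k x) (k' x) := by
  obtain ⟨u', hu, ⟨r, hr, -⟩ | ⟨Y, e', k₁, k', hk, rfl, hkk'⟩⟩ :=
    h.exists_untaus_eqHead (.vis e k)
  · exact absurd hr.symm (ret_ne_vis r e k)
  · obtain ⟨rfl, ⟨⟩, ⟨⟩⟩ := vis_inj hk
    exact ⟨k', hu, hkk'⟩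

theorem IsTrace.of_eutt {t u : ITree E R} {tr : List (EventE E)} {r? : Option R}
    (ht : IsTrace t tr r?) (h : Eutt t u) : IsTrace u tr r? := by
  induction ht generalizing u with
  | nil => exact .nil u
  | retEnd r => exact (IsTrace.retEnd r).of_untaus h.untaus_of_ret_left
  | tauStep _ ih => exact ih h.of_tau_left
  | visStep e x _ ih =>
    obtain ⟨k', hu, hkk'⟩ := h.exists_untaus_vis_of_vis_left
    exact (IsTrace.visStep e x (ih (hkk' x))).of_untaus hu

end ITree

/-- Equivalence up to `Tau` implies trace refinement: if
`t ≡ u` then every trace of `t`, with its optional result, is a trace of `u`. -/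
theorem eutt_implies_refines (E : Type → Type) (R : Type) (t u : ITree E R)
    (h : ITree.Eutt t u) : ITree.Refines t u :=
  fun _ _ htr => htr.of_eutt h
end
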